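/- If a ≤ b < 0 are two zeros of Ai (i.e. Ai(a) = Ai(b) = 0), then |Ai'(b)| ≤ |Ai'(a)|; that is, |Ai'| evaluated at the zeros of Ai is nondecreasing as the zeros move toward −∞. -/

import Mathlib

open MeasureTheory Filter Set

/-- The Airy function of the first kind, defined as
`Ai(x) = (1/π) · lim_{R→∞} ∫₀^R cos(t³/3 + x·t) dt`. -/
noncomputable def Ai (x : ℝ) : ℝ :=
  (1 / Real.pi) *
    limUnder Filter.atTop (fun R : ℝ => ∫ t in (0:ℝ)..R, Real.cos (t ^ 3 / 3 + x * t))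

/-!
Differentiating under the integral sign, and integrating by parts in `t` against the phase
`φ(x, t) = t³/3 + x t` to bound the tails, shows that the truncated integrals `∫₀^R cos φ` and
their `x`-derivatives `-∫₀^R t sin φ` converge locally uniformly in `x`. Hence `Ai` is
differentiable and satisfies Airy's equation `Ai'' = x Ai`. Then Sonin's function
`W = Ai'² - x Ai²` has `W' = -Ai² ≤ 0`, and `W = Ai'²` at the zeros of `Ai`.
-/

open Real intervalIntegral Topology Metric

theorem abs_integral_deriv_mul_le_of_antitone {u u' v v' : ℝ → ℝ} {a b : ℝ} (hab : a ≤ b)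
    (hu : ∀ t ∈ Icc a b, HasDerivAt u (u' t) t) (hv : ∀ t ∈ Icc a b, HasDerivAt v (v' t) t)
    (hu' : IntervalIntegrable u' volume a b) (hv' : IntervalIntegrable v' volume a b)
    (hu_le : ∀ t ∈ Icc a b, |u t| ≤ 1) (hvb : 0 ≤ v b) (hv'_nonpos : ∀ t ∈ Icc a b, v' t ≤ 0) :
    |∫ t in a..b, u' t * v t| ≤ 2 * v a := by
  rw [← uIcc_of_le hab] at hu hv hu_le hv'_nonpos
  have parts := integral_mul_deriv_eq_deriv_mul hu hv hu' hv'
  have hv_drop : ∫ t in a..b, -v' t = v a - v b := by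
    rw [intervalIntegral.integral_neg, integral_eq_sub_of_hasDerivAt hv hv']
    ring
  have hrest : |∫ t in a..b, u t * v' t| ≤ v a - v b := by
    rw [← hv_drop, ← Real.norm_eq_abs]
    refine norm_integral_le_of_norm_le hab (.of_forall fun t ht => ?_) hv'.neg
    have ht' : t ∈ uIcc a b := uIoc_subset_uIcc (uIoc_of_le hab ▸ ht)
    rw [Real.norm_eq_abs, abs_mul, abs_of_nonpos (hv'_nonpos t ht')]
    exact mul_le_of_le_one_left (neg_nonneg.2 (hv'_nonpos t ht')) (hu_le t ht')
  have hva : v b ≤ v a := by linarith [abs_nonneg (∫ t in a..b, u t * v' t)]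
  have hua : |u a * v a| ≤ v a := by
    rw [abs_mul, abs_of_nonneg (hvb.trans hva)]
    exact mul_le_of_le_one_left (hvb.trans hva) (hu_le a left_mem_uIcc)
  have hub : |u b * v b| ≤ v b := by
    rw [abs_mul, abs_of_nonneg hvb]
    exact mul_le_of_le_one_left hvb (hu_le b right_mem_uIcc)
  rw [show ∫ t in a..b, u' t * v t = u b * v b - u a * v a - ∫ t in a..b, u t * v' t by
    linarith]
  rw [abs_le] at hua hub hrest ⊢
  constructor <;> linarith [hua.1, hua.2, hub.1, hub.2, hrest.1, hrest.2]

theorem hasDerivAt_intervalIntegral_of_continuous {E : Type*} [NormedAddCommGroup E]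
    [NormedSpace ℝ E] {F F' : ℝ → ℝ → E} (hF : ∀ x, Continuous (F x))
    (hF' : Continuous fun p : ℝ × ℝ => F' p.1 p.2)
    (hderiv : ∀ x t, HasDerivAt (F · t) (F' x t) x) (a b x₀ : ℝ) :
    HasDerivAt (fun x => ∫ t in a..b, F x t) (∫ t in a..b, F' x₀ t) x₀ := by
  obtain ⟨C, hC⟩ := ((isCompact_closedBall x₀ 1).prod (isCompact_uIcc (a := a) (b := b)))
    |>.exists_bound_of_continuousOn hF'.continuousOn
  refine (hasDerivAt_integral_of_dominated_loc_of_deriv_le (bound := fun _ => C)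
    (closedBall_mem_nhds x₀ one_pos) (.of_forall fun x => (hF x).aestronglyMeasurable)
    ((hF x₀).intervalIntegrable a b) (hF'.comp (.prodMk_right x₀)).aestronglyMeasurable
    (.of_forall fun t ht x hx => hC (x, t) ⟨hx, uIoc_subset_uIcc ht⟩) intervalIntegrable_const
    (.of_forall fun t _ x _ => hderiv x t)).2

theorem uniformCauchySeqOn_of_dist_le {ι α β : Type*} [SemilatticeSup ι] [Nonempty ι]
    [PseudoMetricSpace β] {F : ι → α → β} {s : Set α} {ε : ι → ℝ}
    (hε : Tendsto ε atTop (𝓝 0))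
    (h : ∀ᶠ m in atTop, ∀ n ≥ m, ∀ x ∈ s, dist (F n x) (F m x) ≤ ε m) :
    UniformCauchySeqOn F atTop s := by
  rw [Metric.uniformCauchySeqOn_iff]
  intro δ hδ
  obtain ⟨N, hN⟩ := eventually_atTop.1 (h.and (hε.eventually (gt_mem_nhds (half_pos hδ))))
  refine ⟨N, fun m hm n hn x hx => ?_⟩
  calc dist (F m x) (F n x) ≤ dist (F m x) (F N x) + dist (F n x) (F N x) := dist_triangle_right ..
    _ ≤ ε N + ε N := add_le_add ((hN N le_rfl).1 m hm x hx) ((hN N le_rfl).1 n hn x hx)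
    _ < δ := by linarith [(hN N le_rfl).2]

theorem UniformCauchySeqOn.tendstoUniformlyOn_limUnder {ι α β : Type*} [SemilatticeSup ι]
    [Nonempty ι] [PseudoMetricSpace β] [CompleteSpace β] [Nonempty β] {F : ι → α → β} {s : Set α}
    (hF : UniformCauchySeqOn F atTop s) :
    TendstoUniformlyOn F (fun x => limUnder atTop (F · x)) atTop s :=
  hF.tendstoUniformlyOn_of_tendsto fun _ hx => (hF.cauchySeq hx).tendsto_limUnder

theorem abs_deriv_le_at_zeros_of_hasDerivAt {f g q q' : ℝ → ℝ} {a b : ℝ} (hab : a ≤ b)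
    (hf : ∀ x ∈ Icc a b, HasDerivAt f (g x) x) (hg : ∀ x ∈ Icc a b, HasDerivAt g (q x * f x) x)
    (hq : ∀ x ∈ Icc a b, HasDerivAt q (q' x) x) (hq' : ∀ x ∈ Icc a b, 0 ≤ q' x)
    (ha : f a = 0) (hb : f b = 0) : |g b| ≤ |g a| := by
  set W := fun x => g x ^ 2 - q x * f x ^ 2
  have hW : ∀ x ∈ Icc a b, HasDerivAt W (-(q' x * f x ^ 2)) x := fun x hx => by
    refine (((hg x hx).pow 2).sub ((hq x hx).mul ((hf x hx).pow 2))).congr_deriv ?_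
    simp only [Pi.pow_apply]
    ring
  have hW_anti : AntitoneOn W (Icc a b) :=
    antitoneOn_of_hasDerivWithinAt_nonpos (convex_Icc a b)
      (fun x hx => (hW x hx).continuousAt.continuousWithinAt)
      (fun x hx => (hW x (interior_subset hx)).hasDerivWithinAt)
      (fun x hx => neg_nonpos.2 (mul_nonneg (hq' x (interior_subset hx)) (sq_nonneg _)))
  have hW_ba := hW_anti (left_mem_Icc.2 hab) (right_mem_Icc.2 hab) hab
  simp only [W, ha, hb] at hW_ba
  exact sq_le_sq.1 (by simpa using hW_ba)

noncomputable def airyPhase (x t : ℝ) : ℝ := t ^ 3 / 3 + x * t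

@[fun_prop]
theorem Continuous.airyPhase {α : Type*} [TopologicalSpace α] {f g : α → ℝ} (hf : Continuous f)
    (hg : Continuous g) : Continuous fun a => airyPhase (f a) (g a) := by
  unfold _root_.airyPhase; fun_prop

theorem hasDerivAt_airyPhase (x t : ℝ) : HasDerivAt (airyPhase x) (t ^ 2 + x) t := by
  have := ((hasDerivAt_pow 3 t).div_const 3).add ((hasDerivAt_id t).const_mul x)
  exact this.congr_deriv (by norm_num)

theorem hasDerivAt_airyPhase_param (x t : ℝ) : HasDerivAt (airyPhase · t) t x :=
  (hasDerivAt_mul_const t).const_add (t ^ 3 / 3)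

noncomputable def truncAi (R x : ℝ) : ℝ := ∫ t in (0 : ℝ)..R, cos (airyPhase x t)

noncomputable def truncAiDeriv (R x : ℝ) : ℝ := ∫ t in (0 : ℝ)..R, -(t * sin (airyPhase x t))

noncomputable def airyIntegral (x : ℝ) : ℝ := limUnder atTop (truncAi · x)

noncomputable def airyIntegralDeriv (x : ℝ) : ℝ := limUnder atTop (truncAiDeriv · x)

theorem Ai_eq_mul_airyIntegral : Ai = fun x => 1 / π * airyIntegral x := rfl

theorem hasDerivAt_truncAi (R x : ℝ) : HasDerivAt (truncAi R) (truncAiDeriv R x) x :=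
  hasDerivAt_intervalIntegral_of_continuous (F := fun x t => cos (airyPhase x t))
    (F' := fun x t => -(t * sin (airyPhase x t))) (fun _ => by fun_prop) (by fun_prop)
    (fun x t => (hasDerivAt_airyPhase_param x t).cos.congr_deriv (by ring)) 0 R x

theorem hasDerivAt_truncAiDeriv (R x : ℝ) :
    HasDerivAt (truncAiDeriv R) (x * truncAi R x - sin (airyPhase x R)) x := by
  have hderiv := hasDerivAt_intervalIntegral_of_continuous
    (F := fun x t => -(t * sin (airyPhase x t))) (F' := fun x t => -(t ^ 2 * cos (airyPhase x t)))
    (fun _ => by fun_prop) (by fun_prop)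
    (fun x t => ((hasDerivAt_airyPhase_param x t).sin.const_mul t).fun_neg.congr_deriv (by ring))
    0 R x
  refine hderiv.congr_deriv ?_
  have hsin : ∫ t in (0 : ℝ)..R, cos (airyPhase x t) * (t ^ 2 + x) = sin (airyPhase x R) := by
    rw [integral_eq_sub_of_hasDerivAt (fun t _ => (hasDerivAt_airyPhase x t).sin)
      (by apply Continuous.intervalIntegrable; fun_prop)]
    simp [airyPhase]
  rw [truncAi, ← hsin, ← intervalIntegral.integral_const_mul, ← intervalIntegral.integral_sub]
  · congr 1; ext t; ring
  all_goals apply Continuous.intervalIntegrable; fun_prop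

theorem sq_div_two_le_sq_add {x R t : ℝ} (hR : 0 < R) (hx : 2 * |x| ≤ R ^ 2) (ht : R ≤ t) :
    t ^ 2 / 2 ≤ t ^ 2 + x := by
  nlinarith [neg_abs_le x]

theorem abs_integral_cos_airyPhase_le {x R S : ℝ} (hR : 0 < R) (hx : 2 * |x| ≤ R ^ 2)
    (hRS : R ≤ S) : |∫ t in R..S, cos (airyPhase x t)| ≤ 4 / R ^ 2 := by
  have hpos : ∀ t ∈ Icc R S, 0 < t ∧ 0 < t ^ 2 + x := fun t ht =>
    ⟨hR.trans_le ht.1, by nlinarith [sq_div_two_le_sq_add hR hx ht.1, hR.trans_le ht.1]⟩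
  have hcongr : ∫ t in R..S, cos (airyPhase x t)
      = ∫ t in R..S, cos (airyPhase x t) * (t ^ 2 + x) * (t ^ 2 + x)⁻¹ := by
    refine integral_congr fun t ht => ?_
    rw [uIcc_of_le hRS] at ht
    field_simp [(hpos t ht).2.ne']
  have hbound := abs_integral_deriv_mul_le_of_antitone hRS (u := fun t => sin (airyPhase x t))
    (v := fun t => (t ^ 2 + x)⁻¹) (v' := fun t => -(2 * t) / (t ^ 2 + x) ^ 2)
    (fun t _ => (hasDerivAt_airyPhase x t).sin)
    (fun t ht => (((hasDerivAt_pow 2 t).add_const x).inv (hpos t ht).2.ne').congr_deriv (by ring))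
    (by apply Continuous.intervalIntegrable; fun_prop)
    (ContinuousOn.intervalIntegrable (ContinuousOn.div (by fun_prop) (by fun_prop)
      fun t ht => pow_ne_zero 2 (hpos t (uIcc_of_le hRS ▸ ht)).2.ne'))
    (fun t _ => abs_sin_le_one _) (inv_nonneg.2 (hpos S ⟨hRS, le_rfl⟩).2.le)
    (fun t ht => div_nonpos_of_nonpos_of_nonneg (by linarith [(hpos t ht).1]) (sq_nonneg _))
  rw [hcongr]
  refine hbound.trans ?_
  calc 2 * (R ^ 2 + x)⁻¹ ≤ 2 * (R ^ 2 / 2)⁻¹ := by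
        gcongr; exact sq_div_two_le_sq_add hR hx le_rfl
    _ = 4 / R ^ 2 := by field_simp; norm_num

theorem abs_integral_mul_sin_airyPhase_le {x R S : ℝ} (hR : 0 < R) (hx : 2 * |x| ≤ R ^ 2)
    (hRS : R ≤ S) : |∫ t in R..S, t * sin (airyPhase x t)| ≤ 4 / R := by
  have hpos : ∀ t ∈ Icc R S, 0 < t ∧ 0 < t ^ 2 + x ∧ x ≤ t ^ 2 := fun t ht => by
    have ht0 := hR.trans_le ht.1
    have hhalf := sq_div_two_le_sq_add hR hx ht.1
    exact ⟨ht0, by nlinarith, by nlinarith [le_abs_self x, mul_le_mul ht.1 ht.1 hR.le ht0.le]⟩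
  have hcongr : ∫ t in R..S, t * sin (airyPhase x t)
      = ∫ t in R..S, sin (airyPhase x t) * (t ^ 2 + x) * (t * (t ^ 2 + x)⁻¹) := by
    refine integral_congr fun t ht => ?_
    rw [uIcc_of_le hRS] at ht
    field_simp [(hpos t ht).2.1.ne']
  have hbound := abs_integral_deriv_mul_le_of_antitone hRS (u := fun t => -cos (airyPhase x t))
    (u' := fun t => sin (airyPhase x t) * (t ^ 2 + x))
    (v := fun t => t * (t ^ 2 + x)⁻¹) (v' := fun t => (x - t ^ 2) / (t ^ 2 + x) ^ 2)
    (fun t _ => (hasDerivAt_airyPhase x t).cos.neg.congr_deriv (by ring))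
    (fun t ht => ((hasDerivAt_id t).mul (((hasDerivAt_pow 2 t).add_const x).inv
      (hpos t ht).2.1.ne')).congr_deriv (by
        simp only [Pi.inv_apply, id]; field_simp [(hpos t ht).2.1.ne']; ring))
    (by apply Continuous.intervalIntegrable; fun_prop)
    (ContinuousOn.intervalIntegrable (ContinuousOn.div (by fun_prop) (by fun_prop)
      fun t ht => pow_ne_zero 2 (hpos t (uIcc_of_le hRS ▸ ht)).2.1.ne'))
    (fun t _ => by rw [abs_neg]; exact abs_cos_le_one _)
    (mul_nonneg (hR.le.trans hRS) (inv_nonneg.2 (hpos S ⟨hRS, le_rfl⟩).2.1.le))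
    (fun t ht => div_nonpos_of_nonpos_of_nonneg (by linarith [(hpos t ht).2.2]) (sq_nonneg _))
  rw [hcongr]
  refine hbound.trans ?_
  calc 2 * (R * (R ^ 2 + x)⁻¹) ≤ 2 * (R * (R ^ 2 / 2)⁻¹) := by
        gcongr; exact sq_div_two_le_sq_add hR hx le_rfl
    _ = 4 / R := by field_simp; norm_num

theorem dist_truncAi_le {x R S : ℝ} (hR : 0 < R) (hx : 2 * |x| ≤ R ^ 2) (hRS : R ≤ S) :
    dist (truncAi S x) (truncAi R x) ≤ 4 / R ^ 2 := by
  rw [Real.dist_eq, truncAi, truncAi, 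
    integral_interval_sub_left (Continuous.intervalIntegrable (by fun_prop) _ _)
      (Continuous.intervalIntegrable (by fun_prop) _ _)]
  exact abs_integral_cos_airyPhase_le hR hx hRS

theorem dist_truncAiDeriv_le {x R S : ℝ} (hR : 0 < R) (hx : 2 * |x| ≤ R ^ 2) (hRS : R ≤ S) :
    dist (truncAiDeriv S x) (truncAiDeriv R x) ≤ 4 / R := by
  rw [Real.dist_eq, truncAiDeriv, truncAiDeriv, 
    integral_interval_sub_left (Continuous.intervalIntegrable (by fun_prop) _ _)
      (Continuous.intervalIntegrable (by fun_prop) _ _), intervalIntegral.integral_neg, abs_neg]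
  exact abs_integral_mul_sin_airyPhase_le hR hx hRS

theorem tendstoLocallyUniformly_limUnder_of_dist_le {F : ℝ → ℝ → ℝ} {ε : ℝ → ℝ}
    (hε : Tendsto ε atTop (𝓝 0))
    (hF : ∀ ⦃x R S : ℝ⦄, 0 < R → 2 * |x| ≤ R ^ 2 → R ≤ S → dist (F S x) (F R x) ≤ ε R) :
    TendstoLocallyUniformly F (fun x => limUnder atTop (F · x)) atTop := by
  refine tendstoLocallyUniformly_of_forall_exists_nhds fun x₀ =>
    ⟨ball 0 (|x₀| + 1), isOpen_ball.mem_nhds (by simp), ?_⟩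
  refine (uniformCauchySeqOn_of_dist_le hε ?_).tendstoUniformlyOn_limUnder
  filter_upwards [eventually_gt_atTop 0,
    (tendsto_pow_atTop two_ne_zero).eventually_ge_atTop (2 * (|x₀| + 1))] with R hR hRc S hRS x hx
  rw [mem_ball_zero_iff, Real.norm_eq_abs] at hx
  exact hF hR (by linarith) hRS

theorem tendstoLocallyUniformly_truncAi : TendstoLocallyUniformly truncAi airyIntegral atTop :=
  tendstoLocallyUniformly_limUnder_of_dist_le (ε := fun R => 4 / R ^ 2)
    (tendsto_const_nhds.div_atTop (tendsto_pow_atTop two_ne_zero)) fun _ _ _ => dist_truncAi_le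

theorem tendstoLocallyUniformly_truncAiDeriv :
    TendstoLocallyUniformly truncAiDeriv airyIntegralDeriv atTop :=
  tendstoLocallyUniformly_limUnder_of_dist_le (ε := fun R => 4 / R)
    (tendsto_const_nhds.div_atTop tendsto_id) fun _ _ _ => dist_truncAiDeriv_le

theorem hasDerivAt_airyIntegral (x : ℝ) : HasDerivAt airyIntegral (airyIntegralDeriv x) x :=
  hasDerivAt_of_tendstoLocallyUniformlyOn isOpen_univ
    (tendstoLocallyUniformlyOn_univ.2 tendstoLocallyUniformly_truncAiDeriv)
    (.of_forall fun R x _ => hasDerivAt_truncAi R x)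
    (fun x _ => tendstoLocallyUniformly_truncAi.tendstoLocallyUniformlyOn.tendsto_at (mem_univ x))
    (mem_univ x)

theorem tendsto_cos_airyPhase_div_atTop (x : ℝ) :
    Tendsto (fun R => cos (airyPhase x R) / R) atTop (𝓝 0) := by
  refine squeeze_zero_norm' ?_ (tendsto_const_nhds (x := (1 : ℝ)) |>.div_atTop tendsto_id)
  filter_upwards [eventually_gt_atTop 0] with R hR
  rw [Real.norm_eq_abs, abs_div, abs_of_pos hR]
  exact div_le_div_of_nonneg_right (abs_cos_le_one _) hR.le

theorem hasDerivAt_airyIntegralDeriv (x : ℝ) :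
    HasDerivAt airyIntegralDeriv (x * airyIntegral x) x := by
  have hid : TendstoLocallyUniformly (fun (_ : ℝ) (y : ℝ) => y) id atTop :=
    fun _ hu _ => ⟨univ, univ_mem, .of_forall fun _ _ _ => refl_mem_uniformity hu⟩
  have hmul : TendstoLocallyUniformly (fun R y => y * truncAi R y) (fun y => y * airyIntegral y)
      atTop :=
    hid.fun_mul₀ tendstoLocallyUniformly_truncAi continuous_id
      (continuous_iff_continuousAt.2 fun y => (hasDerivAt_airyIntegral y).continuousAt)
  -- The boundary term `-sin (airyPhase y R)` of `∂_y truncAiDeriv R y` has no limit as `R → ∞`,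
  -- but it is the `y`-derivative of `cos (airyPhase y R) / R`, which tends to `0`.
  refine hasDerivAt_of_tendstoLocallyUniformlyOn
    (f := fun R y => truncAiDeriv R y - cos (airyPhase y R) / R) isOpen_univ
    (tendstoLocallyUniformlyOn_univ.2 hmul)
    ?_ (fun y _ => ?_) (mem_univ x)
  · filter_upwards [eventually_ne_atTop 0] with R hR y _
    refine ((hasDerivAt_truncAiDeriv R y).sub
      ((hasDerivAt_airyPhase_param y R).cos.div_const R)).congr_deriv ?_
    field_simp
    ring
  · simpa using (tendstoLocallyUniformly_truncAiDeriv.tendstoLocallyUniformlyOn.tendsto_at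
      (mem_univ y)).sub (tendsto_cos_airyPhase_div_atTop y)

theorem hasDerivAt_Ai (x : ℝ) : HasDerivAt Ai (1 / π * airyIntegralDeriv x) x :=
  (hasDerivAt_airyIntegral x).const_mul (1 / π)

theorem deriv_Ai : deriv Ai = fun x => 1 / π * airyIntegralDeriv x :=
  funext fun x => (hasDerivAt_Ai x).deriv

theorem hasDerivAt_deriv_Ai (x : ℝ) : HasDerivAt (deriv Ai) (x * Ai x) x := by
  rw [deriv_Ai, Ai_eq_mul_airyIntegral]
  exact ((hasDerivAt_airyIntegralDeriv x).const_mul (1 / π)).congr_deriv (by ring)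

theorem airy_deriv_at_zeros_monotone_general (a b : ℝ) (hab : a ≤ b)
    (hza : Ai a = 0) (hzb : Ai b = 0) :
    |deriv Ai b| ≤ |deriv Ai a| :=
  abs_deriv_le_at_zeros_of_hasDerivAt hab
    (fun x _ => (hasDerivAt_Ai x).differentiableAt.hasDerivAt) (fun x _ => hasDerivAt_deriv_Ai x)
    (fun x _ => hasDerivAt_id x) (fun _ _ => zero_le_one) hza hzb

/-- If `a ≤ b < 0` are two zeros of `Ai`, then `|Ai'(b)| ≤ |Ai'(a)|`: `|Ai'|` evaluated at the
zeros of `Ai` is nondecreasing as the zeros move toward `−∞`. -/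
theorem airy_deriv_at_zeros_monotone (a b : ℝ) (hab : a ≤ b) (hb : b < 0)
    (hza : Ai a = 0) (hzb : Ai b = 0) :
    |deriv Ai b| ≤ |deriv Ai a| :=
  airy_deriv_at_zeros_monotone_general a b hab hza hzb
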